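/- arXiv:1107.3090 — 5 statements merged into one kernel-verified Lean document; each statement's English description precedes it below -/
import Mathlib

section
/- Motzkin–Straus theorem (independent set form): for an undirected graph G with adjacency matrix A (symmetric 0-1 matrix, zero diagonal) on n vertices, the minimum of yᵀ(A + I)y over probability vectors y in the standard simplex equals 1/α(G), where α(G) is the size of a maximum independent set of G. -/
/-!
Write `Q y = yᵀ(A + I)y = yᵀAy + ‖y‖²`. If the support of a probability vector `y` contains an
edge `ab`, then `Q` is affine along `d = e_a - e_b`, since `dᵀ(A + I)d = 2 - 2 A a b = 0`; so
moving all the mass of one endpoint onto the other, in the direction in which `Q` does not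
increase, shrinks the support without increasing `Q`. Iterating, we reach a probability vector
whose support `S` is independent; there `yᵀAy = 0` and, by Cauchy–Schwarz,
`‖y‖² ≥ 1 / |S| ≥ 1 / α`. The uniform vector on a maximum independent set attains `1 / α`.
-/

open Matrix Finset

namespace Matrix

def IsIndepSet {ι R : Type*} [Zero R] (A : Matrix ι ι R) (s : Finset ι) : Prop :=
  ∀ i ∈ s, ∀ j ∈ s, i ≠ j → A i j = 0

variable {ι R : Type*}

theorem IsIndepSet.dotProduct_mulVec_eq_zero [Fintype ι] [NonUnitalNonAssocSemiring R]
    {A : Matrix ι ι R} (hdiag : ∀ i, A i i = 0) {s : Finset ι} (hs : A.IsIndepSet s)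
    {y : ι → R} (hy : ∀ i ∉ s, y i = 0) :
    y ⬝ᵥ A *ᵥ y = 0 := by
  refine sum_eq_zero fun i _ => ?_
  by_cases hi : i ∈ s
  · refine mul_eq_zero_of_right _ (sum_eq_zero fun j _ => ?_)
    by_cases hj : j ∈ s
    · obtain rfl | hij := eq_or_ne i j
      · exact mul_eq_zero_of_left (hdiag i) _
      · exact mul_eq_zero_of_left (hs i hi j hj hij) _
    · rw [hy j hj, mul_zero]
  · rw [hy i hi, zero_mul]

theorem IsSymm.dotProduct_mulVec_add_smul [Fintype ι] [CommRing R] {M : Matrix ι ι R}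
    (hM : M.IsSymm) (y d : ι → R) (t : R) :
    (y + t • d) ⬝ᵥ M *ᵥ (y + t • d) =
      y ⬝ᵥ M *ᵥ y + 2 * t * (d ⬝ᵥ M *ᵥ y) + t ^ 2 * (d ⬝ᵥ M *ᵥ d) := by
  have hyd : y ⬝ᵥ M *ᵥ d = d ⬝ᵥ M *ᵥ y := by
    rw [dotProduct_mulVec, ← mulVec_transpose, hM.eq, dotProduct_comm]
  simp only [mulVec_add, mulVec_smul, dotProduct_add, add_dotProduct, dotProduct_smul,
    smul_dotProduct, smul_eq_mul, hyd]
  ring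

theorem one_le_card_support_mul_dotProduct_self [Fintype ι] [CommRing R] [LinearOrder R]
    [IsStrictOrderedRing R] {y : ι → R} (hy : y ∈ stdSimplex R ι) :
    1 ≤ #{i | y i ≠ 0} * (y ⬝ᵥ y) := by
  have hsum : ∑ i ∈ {i | y i ≠ 0}, y i = 1 := (sum_filter_ne_zero _).trans hy.2
  have hsq : ∑ i ∈ {i | y i ≠ 0}, y i ^ 2 = y ⬝ᵥ y := by
    rw [dotProduct, sum_filter_of_ne fun i _ h => by simpa using h]
    simp only [sq]
  simpa [hsum, hsq] using sq_sum_le_card_mul_sum_sq (s := {i | y i ≠ 0}) (f := y)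

section transferMass

variable [DecidableEq ι] [CommRing R]

def transferMass (y : ι → R) (a b : ι) : ι → R :=
  y + y b • (Pi.single a 1 - Pi.single b 1)

variable {y : ι → R} {a b : ι}

theorem transferMass_apply_left (hab : a ≠ b) : transferMass y a b a = y a + y b := by
  simp [transferMass, hab]

theorem transferMass_apply_right (hab : a ≠ b) : transferMass y a b b = 0 := by
  simp [transferMass, hab.symm]

theorem transferMass_apply_of_ne {x : ι} (hxa : x ≠ a) (hxb : x ≠ b) :
    transferMass y a b x = y x := by
  simp [transferMass, hxa, hxb]

variable [Fintype ι]

theorem IsSymm.dotProduct_mulVec_transferMass {M : Matrix ι ι R} (hM : M.IsSymm)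
    (hMab : M a a + M b b = M a b + M b a) (y : ι → R) :
    transferMass y a b ⬝ᵥ M *ᵥ transferMass y a b =
      y ⬝ᵥ M *ᵥ y + 2 * y b * ((M *ᵥ y) a - (M *ᵥ y) b) := by
  have hd (w : ι → R) : (Pi.single a 1 - Pi.single b 1) ⬝ᵥ w = w a - w b := by
    simp [sub_dotProduct, single_dotProduct]
  rw [transferMass, hM.dotProduct_mulVec_add_smul, hd, hd]
  simp only [mulVec_sub, mulVec_single_one, Pi.sub_apply, col_apply]
  linear_combination y b ^ 2 * hMab

theorem card_support_transferMass_lt [DecidableEq R] (hab : a ≠ b) (ha : y a ≠ 0)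
    (hb : y b ≠ 0) :
    #{x | transferMass y a b x ≠ 0} < #{x | y x ≠ 0} := by
  refine (card_le_card fun x hx => ?_).trans_lt (card_erase_lt_of_mem (by simpa using hb))
  rw [mem_filter_univ] at hx
  obtain rfl | hxb := eq_or_ne x b
  · exact absurd (transferMass_apply_right hab) hx
  refine mem_erase.2 ⟨hxb, (mem_filter_univ x).2 ?_⟩
  obtain rfl | hxa := eq_or_ne x a
  · exact ha
  · rwa [transferMass_apply_of_ne hxa hxb] at hx

variable [LinearOrder R] [IsStrictOrderedRing R]

theorem transferMass_mem_stdSimplex (hab : a ≠ b) (hy : y ∈ stdSimplex R ι) :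
    transferMass y a b ∈ stdSimplex R ι := by
  refine ⟨fun x => ?_, ?_⟩
  · obtain rfl | hxa := eq_or_ne x a
    · rw [transferMass_apply_left hab]
      exact add_nonneg (hy.1 x) (hy.1 b)
    obtain rfl | hxb := eq_or_ne x b
    · rw [transferMass_apply_right hab]
    · rw [transferMass_apply_of_ne hxa hxb]
      exact hy.1 x
  · simp [transferMass, sum_add_distrib, ← mul_sum, hy.2]

end transferMass

variable [Fintype ι] [DecidableEq ι]

theorem IsSymm.exists_card_support_lt [CommRing R] [LinearOrder R] [IsStrictOrderedRing R]
    {M : Matrix ι ι R} (hM : M.IsSymm) {a b : ι} (hab : a ≠ b)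
    (hMab : M a a + M b b = M a b + M b a) {y : ι → R} (hy : y ∈ stdSimplex R ι)
    (ha : y a ≠ 0) (hb : y b ≠ 0) :
    ∃ y' ∈ stdSimplex R ι,
      y' ⬝ᵥ M *ᵥ y' ≤ y ⬝ᵥ M *ᵥ y ∧ #{i | y' i ≠ 0} < #{i | y i ≠ 0} := by
  wlog hle : (M *ᵥ y) a ≤ (M *ᵥ y) b generalizing a b
  · exact this hab.symm (by linarith) hb ha (le_of_not_ge hle)
  refine ⟨transferMass y a b, transferMass_mem_stdSimplex hab hy, ?_,
    card_support_transferMass_lt hab ha hb⟩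
  rw [hM.dotProduct_mulVec_transferMass hMab]
  have := mul_nonpos_of_nonneg_of_nonpos (mul_nonneg zero_le_two (hy.1 b)) (sub_nonpos.2 hle)
  linarith

theorem exists_isIndepSet_support_dotProduct_add_one_mulVec_le [CommRing R] [LinearOrder R]
    [IsStrictOrderedRing R] {A : Matrix ι ι R} (hsymm : A.IsSymm)
    (h01 : ∀ i j, A i j = 0 ∨ A i j = 1) (hdiag : ∀ i, A i i = 0) {y : ι → R}
    (hy : y ∈ stdSimplex R ι) :
    ∃ y' ∈ stdSimplex R ι,
      y' ⬝ᵥ (A + 1) *ᵥ y' ≤ y ⬝ᵥ (A + 1) *ᵥ y ∧ A.IsIndepSet {i | y' i ≠ 0} := by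
  induction hn : #{i | y i ≠ 0} using Nat.strong_induction_on generalizing y with
  | _ n ih =>
  by_cases hind : A.IsIndepSet {i | y i ≠ 0}
  · exact ⟨y, hy, le_rfl, hind⟩
  simp only [IsIndepSet, not_forall] at hind
  obtain ⟨a, ha, b, hb, hab, hAab⟩ := hind
  have hM : (A + 1) a a + (A + 1) b b = (A + 1) a b + (A + 1) b a := by
    simp [hab, hab.symm, hdiag, (h01 a b).resolve_left hAab, hsymm.apply a b]
  obtain ⟨y₁, hy₁, hle₁, hlt⟩ := (hsymm.add isSymm_one).exists_card_support_lt hab hM hy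
    (by simpa using ha) (by simpa using hb)
  obtain ⟨y₂, hy₂, hle₂, hind₂⟩ := ih _ (hn ▸ hlt) hy₁ rfl
  exact ⟨y₂, hy₂, hle₂.trans hle₁, hind₂⟩

variable {K : Type*} [Field K] [LinearOrder K] [IsStrictOrderedRing K] {A : Matrix ι ι K}

theorem IsIndepSet.exists_dotProduct_add_one_mulVec_eq_one_div_card (hdiag : ∀ i, A i i = 0)
    {s : Finset ι} (hs : A.IsIndepSet s) (hne : s.Nonempty) :
    ∃ y ∈ stdSimplex K ι, y ⬝ᵥ (A + 1) *ᵥ y = 1 / #s := by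
  set y : ι → K := fun i => if i ∈ s then (#s : K)⁻¹ else 0
  have hcard : (#s : K) ≠ 0 := by exact_mod_cast hne.card_pos.ne'
  refine ⟨y, ⟨fun i => by positivity, ?_⟩, ?_⟩
  · simp [y, hcard]
  · rw [add_mulVec, one_mulVec, dotProduct_add,
      hs.dotProduct_mulVec_eq_zero hdiag fun i hi => if_neg hi, zero_add]
    simp only [dotProduct, mul_ite, ite_mul, zero_mul, mul_zero, sum_ite_mem, univ_inter,
      inter_self, sum_const, nsmul_eq_mul, one_div, y]
    field_simp

theorem one_div_le_dotProduct_add_one_mulVec (hsymm : A.IsSymm)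
    (h01 : ∀ i j, A i j = 0 ∨ A i j = 1) (hdiag : ∀ i, A i i = 0) {α : ℕ}
    (hα : ∀ s, A.IsIndepSet s → #s ≤ α) {y : ι → K} (hy : y ∈ stdSimplex K ι) :
    1 / (α : K) ≤ y ⬝ᵥ (A + 1) *ᵥ y := by
  obtain ⟨y', hy', hle, hind⟩ :=
    exists_isIndepSet_support_dotProduct_add_one_mulVec_le hsymm h01 hdiag hy
  have hQ : y' ⬝ᵥ (A + 1) *ᵥ y' = y' ⬝ᵥ y' := by
    rw [add_mulVec, one_mulVec, dotProduct_add,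
      hind.dotProduct_mulVec_eq_zero hdiag fun i hi => by simpa using hi, zero_add]
  have h1 : 1 ≤ (α : K) * (y ⬝ᵥ (A + 1) *ᵥ y) := calc
    1 ≤ #{i | y' i ≠ 0} * (y' ⬝ᵥ y') := one_le_card_support_mul_dotProduct_self hy'
    _ ≤ α * (y' ⬝ᵥ y') := by
      gcongr
      · exact sum_nonneg fun i _ => mul_self_nonneg (y' i)
      · exact_mod_cast hα _ hind
    _ ≤ α * (y ⬝ᵥ (A + 1) *ᵥ y) := by rw [← hQ]; gcongr
  have hα0 : (0 : K) < α := Nat.cast_pos.2 (Nat.pos_of_ne_zero fun h => by norm_num [h] at h1)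
  rw [div_le_iff₀ hα0]
  linarith

end Matrix

/-- Motzkin–Straus theorem (independent set form):
min over the simplex of yᵀ(A+I)y equals 1/α(G). -/
theorem motzkin_straus {n : ℕ} (hn : 0 < n)
    (A : Matrix (Fin n) (Fin n) ℝ) (hsymm : A.IsSymm)
    (h01 : ∀ i j, A i j = 0 ∨ A i j = 1) (hdiag : ∀ i, A i i = 0)
    (α : ℕ)
    (hα : IsGreatest {m : ℕ | ∃ s : Finset (Fin n),
        (∀ i ∈ s, ∀ j ∈ s, i ≠ j → A i j = 0) ∧ s.card = m} α) :
    IsLeast {v : ℝ | ∃ y : Fin n → ℝ, y ∈ stdSimplex ℝ (Fin n) ∧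
        v = y ⬝ᵥ (A + 1).mulVec y} (1 / α) := by
  obtain ⟨s, hs, rfl⟩ := hα.1
  have hne : s.Nonempty := by
    obtain ⟨i⟩ := Fin.pos_iff_nonempty.mp hn
    exact card_pos.mp (hα.2 ⟨{i}, by simp, card_singleton i⟩)
  constructor
  · obtain ⟨y, hy, hQ⟩ :=
      IsIndepSet.exists_dotProduct_add_one_mulVec_eq_one_div_card hdiag hs hne
    exact ⟨y, hy, hQ.symm⟩
  · rintro v ⟨y, hy, rfl⟩
    exact one_div_le_dotProduct_add_one_mulVec hsymm h01 hdiag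
      (fun t ht => hα.2 ⟨t, ht, rfl⟩) hy
end

section
/- For an undirected graph G with adjacency matrix A, a positive integer j, and the quadratic form Q(y) = yᵀ(A+I)y on the simplex: there exists y in the simplex with Q(y) ≤ 1/j if and only if G has an independent set of size at least j. -/
/-!
Write `Q y = yᵀ (A + 1) y`. If the support of `y ∈ Δ` contains an edge `uv`, then `Q` is affine
along `eᵤ - eᵥ`, so moving all the mass of one endpoint onto the other does not increase `Q` and
shrinks the support. Iterating yields `z ∈ Δ` with independent support and `Q z ≤ Q y`, while
`Q z ≥ ‖z‖² ≥ 1 / |supp z|` by Cauchy–Schwarz. Conversely, the uniform vector on an independent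
set `s` has `Q = 1 / |s|`.
-/

open Matrix Finset

variable {ι : Type*}

def Matrix.IsIndepSet_s2 (A : Matrix ι ι ℝ) (s : Finset ι) : Prop :=
  ∀ i ∈ s, ∀ k ∈ s, i ≠ k → A i k = 0

lemma Matrix.IsAdjMatrix.apply_nonneg {A : Matrix ι ι ℝ} (hA : A.IsAdjMatrix) (i k : ι) :
    0 ≤ A i k :=
  (hA.zero_or_one i k).elim (·.ge) (·.symm ▸ zero_le_one)

section shiftMass

variable [DecidableEq ι]

def shiftMass (y : ι → ℝ) (u v : ι) : ι → ℝ := y + y v • (Pi.single u 1 - Pi.single v 1)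

variable {y : ι → ℝ} {u v : ι}

@[simp] lemma shiftMass_apply_left (huv : u ≠ v) : shiftMass y u v u = y u + y v := by
  simp [shiftMass, huv]

@[simp] lemma shiftMass_apply_right (huv : u ≠ v) : shiftMass y u v v = 0 := by
  simp [shiftMass, huv.symm]

lemma shiftMass_apply_of_ne {i : ι} (hu : i ≠ u) (hv : i ≠ v) : shiftMass y u v i = y i := by
  simp [shiftMass, hu, hv]

end shiftMass

noncomputable def faceBarycenter [DecidableEq ι] (s : Finset ι) : ι → ℝ :=
  fun i => if i ∈ s then (#s : ℝ)⁻¹ else 0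

variable [Fintype ι] {y : ι → ℝ}

lemma dotProduct_mulVec_add_self {M : Matrix ι ι ℝ} (hM : M.IsSymm) (x y : ι → ℝ) :
    (y + x) ⬝ᵥ M *ᵥ (y + x) = y ⬝ᵥ M *ᵥ y + 2 * (x ⬝ᵥ M *ᵥ y) + x ⬝ᵥ M *ᵥ x := by
  have hxy : y ⬝ᵥ M *ᵥ x = x ⬝ᵥ M *ᵥ y := by
    rw [dotProduct_mulVec, ← mulVec_transpose, hM.eq, dotProduct_comm]
  rw [mulVec_add, add_dotProduct, dotProduct_add, dotProduct_add, hxy]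
  ring

lemma sum_support_eq_one (hy : y ∈ stdSimplex ℝ ι) : ∑ i ∈ {i | y i ≠ 0}, y i = 1 :=
  (sum_filter_ne_zero _).trans hy.2

lemma support_nonempty_of_mem_stdSimplex (hy : y ∈ stdSimplex ℝ ι) :
    ({i | y i ≠ 0} : Finset ι).Nonempty :=
  nonempty_of_sum_ne_zero ((sum_support_eq_one hy).symm ▸ one_ne_zero)

lemma inv_card_support_le_dotProduct_self (hy : y ∈ stdSimplex ℝ ι) :
    (#{i | y i ≠ 0} : ℝ)⁻¹ ≤ y ⬝ᵥ y := by
  have hsq : ∑ i ∈ {i | y i ≠ 0}, y i ^ 2 = y ⬝ᵥ y := by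
    rw [sum_filter_of_ne fun i _ h => by simpa using h]
    simp only [dotProduct, sq]
  have hcs := sq_sum_le_card_mul_sum_sq (s := {i | y i ≠ 0}) (f := y)
  rw [sum_support_eq_one hy, one_pow, hsq] at hcs
  rw [inv_le_iff_one_le_mul₀ (by exact_mod_cast (support_nonempty_of_mem_stdSimplex hy).card_pos),
    mul_comm]
  exact hcs

variable [DecidableEq ι] {A : Matrix ι ι ℝ} {u v : ι}

lemma inv_card_support_le_dotProduct_mulVec (hA : ∀ i k, 0 ≤ A i k) (hy : y ∈ stdSimplex ℝ ι) :
    (#{i | y i ≠ 0} : ℝ)⁻¹ ≤ y ⬝ᵥ (A + 1) *ᵥ y := by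
  have hcross : 0 ≤ y ⬝ᵥ A *ᵥ y :=
    dotProduct_nonneg_of_nonneg hy.1 fun i => dotProduct_nonneg_of_nonneg (hA i) hy.1
  rw [add_mulVec, one_mulVec, dotProduct_add]
  linarith [inv_card_support_le_dotProduct_self hy]

lemma shiftMass_mem_stdSimplex (huv : u ≠ v) (hy : y ∈ stdSimplex ℝ ι) :
    shiftMass y u v ∈ stdSimplex ℝ ι := by
  refine ⟨fun i => ?_, ?_⟩
  · by_cases hu : i = u
    · subst hu; simpa [huv] using add_nonneg (hy.1 i) (hy.1 v)
    by_cases hv : i = v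
    · simp [hv, huv]
    · simpa [shiftMass_apply_of_ne hu hv] using hy.1 i
  · simp [shiftMass, sum_add_distrib, hy.2, ← mul_sum, sum_sub_distrib]

lemma support_shiftMass_subset (huv : u ≠ v) (hyu : y u ≠ 0) :
    ({i | shiftMass y u v i ≠ 0} : Finset ι) ⊆ ({i | y i ≠ 0} : Finset ι).erase v := by
  intro i hi
  simp only [mem_erase, mem_filter, mem_univ, true_and] at hi ⊢
  have hiv : i ≠ v := by rintro rfl; exact hi (shiftMass_apply_right huv)
  refine ⟨hiv, ?_⟩
  by_cases hiu : i = u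
  · exact hiu ▸ hyu
  · rwa [shiftMass_apply_of_ne hiu hiv] at hi

-- For an edge `uv`, `(eᵤ - eᵥ)ᵀ (A + 1) (eᵤ - eᵥ) = 1 - 1 - 1 + 1 = 0`,
-- so the form is affine along `eᵤ - eᵥ`.
lemma dotProduct_mulVec_shiftMass (hA : A.IsAdjMatrix) (huv : u ≠ v) (hadj : A u v = 1) :
    shiftMass y u v ⬝ᵥ (A + 1) *ᵥ shiftMass y u v =
      y ⬝ᵥ (A + 1) *ᵥ y + 2 * y v * (((A + 1) *ᵥ y) u - ((A + 1) *ᵥ y) v) := by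
  have hvu : A v u = 1 := (hA.symm.apply u v).trans hadj
  rw [shiftMass, dotProduct_mulVec_add_self (hA.symm.add isSymm_one)]
  simp only [smul_dotProduct, sub_dotProduct, single_dotProduct, one_mul, smul_eq_mul,
    mulVec_smul, mulVec_sub, mulVec_single, MulOpposite.op_one, one_smul, dotProduct_smul,
    dotProduct_sub, col_apply, Matrix.add_apply, hA.apply_diag, one_apply_eq, zero_add, mul_one,
    hvu, ne_eq, huv.symm, not_false_eq_true, one_apply_ne, add_zero, sub_self, mul_zero, hadj, huv,
    add_right_inj]
  ring

lemma exists_support_card_lt_of_adj (hA : A.IsAdjMatrix) (hy : y ∈ stdSimplex ℝ ι)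
    (hu : y u ≠ 0) (hv : y v ≠ 0) (huv : u ≠ v) (hadj : A u v = 1) :
    ∃ z ∈ stdSimplex ℝ ι, #{i | z i ≠ 0} < #{i | y i ≠ 0} ∧
      z ⬝ᵥ (A + 1) *ᵥ z ≤ y ⬝ᵥ (A + 1) *ᵥ y := by
  wlog hgrad : ((A + 1) *ᵥ y) u ≤ ((A + 1) *ᵥ y) v generalizing u v
  · exact this hv hu huv.symm ((hA.symm.apply u v).trans hadj) (le_of_not_ge hgrad)
  refine ⟨shiftMass y u v, shiftMass_mem_stdSimplex huv hy, ?_, ?_⟩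
  · exact (card_le_card (support_shiftMass_subset huv hu)).trans_lt
      (card_erase_lt_of_mem (by simpa using hv))
  · rw [dotProduct_mulVec_shiftMass hA huv hadj]
    have := mul_nonpos_of_nonneg_of_nonpos (mul_nonneg zero_le_two (hy.1 v)) (sub_nonpos.2 hgrad)
    linarith

theorem exists_isIndepSet_support_le (hA : A.IsAdjMatrix) (hy : y ∈ stdSimplex ℝ ι) :
    ∃ z ∈ stdSimplex ℝ ι, A.IsIndepSet_s2 {i | z i ≠ 0} ∧
      z ⬝ᵥ (A + 1) *ᵥ z ≤ y ⬝ᵥ (A + 1) *ᵥ y := by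
  induction hN : #{i | y i ≠ 0} using Nat.strong_induction_on generalizing y with
  | _ N ih =>
  by_cases hind : A.IsIndepSet_s2 {i | y i ≠ 0}
  · exact ⟨y, hy, hind, le_rfl⟩
  obtain ⟨u, hu, v, hv, huv, hAuv⟩ : ∃ u, y u ≠ 0 ∧ ∃ v, y v ≠ 0 ∧ u ≠ v ∧ A u v ≠ 0 := by
    simpa [Matrix.IsIndepSet_s2] using hind
  obtain ⟨z, hz, hcard, hle⟩ :=
    exists_support_card_lt_of_adj hA hy hu hv huv ((hA.apply_ne_zero_iff u v).1 hAuv)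
  obtain ⟨w, hw, hwind, hwle⟩ := ih _ (hN ▸ hcard) hz rfl
  exact ⟨w, hw, hwind, hwle.trans hle⟩

lemma faceBarycenter_mem_stdSimplex {s : Finset ι} (hs : s.Nonempty) :
    faceBarycenter s ∈ stdSimplex ℝ ι := by
  refine ⟨fun i => ?_, ?_⟩
  · unfold faceBarycenter; split_ifs <;> positivity
  · simp [faceBarycenter, hs.card_pos.ne']

lemma dotProduct_mulVec_faceBarycenter (hdiag : ∀ i, A i i = 0) {s : Finset ι}
    (hs : A.IsIndepSet_s2 s) :
    faceBarycenter s ⬝ᵥ (A + 1) *ᵥ faceBarycenter s = (#s : ℝ)⁻¹ := by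
  have hcross : faceBarycenter s ⬝ᵥ A *ᵥ faceBarycenter s = 0 := by
    simp only [dotProduct, mulVec, mul_sum]
    refine sum_eq_zero fun i _ => sum_eq_zero fun k _ => ?_
    by_cases hi : i ∈ s
    · by_cases hk : k ∈ s
      · obtain rfl | hik := eq_or_ne i k
        · simp [hdiag]
        · simp [hs i hi k hk hik]
      · simp [faceBarycenter, hk]
    · simp [faceBarycenter, hi]
  have hself : faceBarycenter s ⬝ᵥ faceBarycenter s = (#s : ℝ)⁻¹ := by
    rcases eq_or_ne (#s : ℝ) 0 with h | h <;>
      simp [dotProduct, faceBarycenter, h]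
  rw [add_mulVec, one_mulVec, dotProduct_add, hcross, hself, zero_add]

theorem quadratic_iff_independent_set_general {n : ℕ}
    (A : Matrix (Fin n) (Fin n) ℝ) (hsymm : A.IsSymm)
    (h01 : ∀ i j, A i j = 0 ∨ A i j = 1) (hdiag : ∀ i, A i i = 0)
    (j : ℕ) (hj : 0 < j) :
    (∃ y : Fin n → ℝ, y ∈ stdSimplex ℝ (Fin n) ∧
        y ⬝ᵥ (A + 1).mulVec y ≤ 1 / j)
      ↔ ∃ s : Finset (Fin n),
          (∀ i ∈ s, ∀ k ∈ s, i ≠ k → A i k = 0) ∧ j ≤ s.card := by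
  have hA : A.IsAdjMatrix := ⟨h01, hsymm, hdiag⟩
  have hj' : (0 : ℝ) < j := by exact_mod_cast hj
  constructor
  · rintro ⟨y, hy, hQ⟩
    obtain ⟨z, hz, hind, hle⟩ := exists_isIndepSet_support_le hA hy
    have hpos : (0 : ℝ) < #{i | z i ≠ 0} := by
      exact_mod_cast (support_nonempty_of_mem_stdSimplex hz).card_pos
    have hinv : (#{i | z i ≠ 0} : ℝ)⁻¹ ≤ (j : ℝ)⁻¹ :=
      (inv_card_support_le_dotProduct_mulVec hA.apply_nonneg hz).trans
        (hle.trans (one_div (j : ℝ) ▸ hQ))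
    exact ⟨_, hind, by exact_mod_cast (inv_le_inv₀ hpos hj').1 hinv⟩
  · rintro ⟨s, hs, hjs⟩
    refine ⟨faceBarycenter s, faceBarycenter_mem_stdSimplex (card_pos.1 (hj.trans_le hjs)), ?_⟩
    rw [dotProduct_mulVec_faceBarycenter hdiag hs, one_div]
    exact inv_anti₀ hj' (by exact_mod_cast hjs)

/-- There is a simplex vector y with yᵀ(A+I)y ≤ 1/j iff G has an independent
set of size at least j. -/
theorem quadratic_iff_independent_set {n : ℕ} (hn : 0 < n)
    (A : Matrix (Fin n) (Fin n) ℝ) (hsymm : A.IsSymm)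
    (h01 : ∀ i j, A i j = 0 ∨ A i j = 1) (hdiag : ∀ i, A i i = 0)
    (j : ℕ) (hj : 0 < j) :
    (∃ y : Fin n → ℝ, y ∈ stdSimplex ℝ (Fin n) ∧
        y ⬝ᵥ (A + 1).mulVec y ≤ 1 / j)
      ↔ ∃ s : Finset (Fin n),
          (∀ i ∈ s, ∀ k ∈ s, i ≠ k → A i k = 0) ∧ j ≤ s.card :=
  quadratic_iff_independent_set_general A hsymm h01 hdiag j hj
end

section
/- For positive reals c₁,…,cₙ and ε > 0, define πᵢ* for each i by (1+επᵢ*)/(n+ε) = √cᵢ/∑ⱼ√cⱼ. If these πᵢ* are nonnegative and sum to 1, then π* achieves equality: (1/n)∑ᵢ cᵢ/(1+επᵢ*) = (∑ᵢ√cᵢ)²/(n(n+ε)). Hence the minimum over the simplex of (1/n)∑ᵢ cᵢ/(1+επᵢ) equals (∑ᵢ√cᵢ)²/(n(n+ε)). -/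
/-- π* achieves equality in the Jensen bound, hence it attains the minimum of the
reduced cost over the simplex. -/
theorem sqrtsum_equality_and_min {n : ℕ} (hn : 0 < n)
    (c : Fin n → ℝ) (hc : ∀ i, 0 < c i) (ε : ℝ) (hε : 0 < ε)
    (πstar : Fin n → ℝ)
    (hdef : ∀ i, (1 + ε * πstar i) / ((n : ℝ) + ε)
      = Real.sqrt (c i) / ∑ j, Real.sqrt (c j))
    (hpos : ∀ i, 0 ≤ πstar i) (hsum : ∑ i, πstar i = 1) :
    (1 / n) * (∑ i, c i / (1 + ε * πstar i))
        = (∑ i, Real.sqrt (c i)) ^ 2 / (n * (n + ε)) ∧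
    IsLeast {v : ℝ | ∃ π : Fin n → ℝ, (∀ i, 0 ≤ π i) ∧ (∑ i, π i = 1) ∧
        v = (1 / n) * ∑ i, c i / (1 + ε * π i)}
      ((∑ i, Real.sqrt (c i)) ^ 2 / (n * (n + ε))) := by
  have hnε : (0 : ℝ) < (n : ℝ) + ε := by positivity
  have hn' : (0 : ℝ) < (n : ℝ) := by exact_mod_cast hn
  set T : ℝ := ∑ j, Real.sqrt (c j) with hT
  have hTpos : 0 < T := by
    refine Finset.sum_pos (fun i _ => Real.sqrt_pos.2 (hc i)) ?_
    exact Finset.univ_nonempty_iff.2 ⟨⟨0, hn⟩⟩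
  have hkey : ∀ i, 1 + ε * πstar i = ((n : ℝ) + ε) * Real.sqrt (c i) / T := by
    intro i
    have := hdef i
    field_simp at this ⊢
    linarith [this]
  have heq : (1 / n) * (∑ i, c i / (1 + ε * πstar i)) = T ^ 2 / (n * (n + ε)) := by
    have : ∀ i, c i / (1 + ε * πstar i) = Real.sqrt (c i) * T / ((n : ℝ) + ε) := by
      intro i
      rw [hkey i]
      have hsq : Real.sqrt (c i) * Real.sqrt (c i) = c i :=
        Real.mul_self_sqrt (hc i).le
      have hs : (0:ℝ) < Real.sqrt (c i) := Real.sqrt_pos.2 (hc i)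
      rw [div_div_eq_mul_div, ← hsq]
      field_simp
      ring_nf; rw [Real.sqrt_sq hs.le]
    rw [Finset.sum_congr rfl (fun i _ => this i), ← Finset.sum_div,
      ← Finset.sum_mul, ← hT]
    field_simp
  refine ⟨heq, ⟨⟨πstar, hpos, hsum, heq.symm⟩, ?_⟩⟩
  rintro v ⟨π, hπpos, hπsum, rfl⟩
  have hgpos : ∀ i ∈ Finset.univ, (0:ℝ) < 1 + ε * π i := fun i _ => by
    have := mul_nonneg hε.le (hπpos i); linarith
  have hCS := Finset.sq_sum_div_le_sum_sq_div Finset.univ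
    (fun i => Real.sqrt (c i)) hgpos
  have hden : ∑ i, (1 + ε * π i) = (n : ℝ) + ε := by
    rw [Finset.sum_add_distrib, ← Finset.mul_sum, hπsum, mul_one]
    simp
  have hsq : ∀ i, Real.sqrt (c i) ^ 2 = c i := fun i => Real.sq_sqrt (hc i).le
  rw [hden] at hCS
  simp only [hsq] at hCS
  have : T ^ 2 / ((n : ℝ) + ε) ≤ ∑ i, c i / (1 + ε * π i) := hCS
  calc T ^ 2 / ((n:ℝ) * ((n:ℝ) + ε)) = (1 / n) * (T ^ 2 / ((n:ℝ) + ε)) := by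
        field_simp
    _ ≤ (1 / n) * ∑ i, c i / (1 + ε * π i) := by
        apply mul_le_mul_of_nonneg_left this (by positivity)
end

section
/- For positive integers c₁,…,cₙ and ε = n∑ᵢcᵢ − n > 0, the numbers πᵢ* = ((n+ε)√cᵢ/∑ⱼ√cⱼ − 1)/ε satisfy πᵢ* > 0 for all i and ∑ᵢ πᵢ* = 1. -/
/-! By Cauchy–Schwarz, `S := ∑ⱼ √cⱼ` satisfies `S² ≤ n ∑ⱼ cⱼ = n + ε`, and `n + ε > 1`
(as `ε > 0` rules out `n = 0`); hence `S < n + ε ≤ (n + ε) √cᵢ`, which is the positivity of `πᵢ*`.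
The sum is `((n + ε) - n) / ε = 1`. -/

open Finset

theorem sq_sum_sqrt_le_card_mul_sum {ι : Type*} (s : Finset ι) (f : ι → ℝ)
    (hf : ∀ i ∈ s, 0 ≤ f i) :
    (∑ i ∈ s, √(f i)) ^ 2 ≤ #s * ∑ i ∈ s, f i := by
  calc (∑ i ∈ s, √(f i)) ^ 2 ≤ #s * ∑ i ∈ s, √(f i) ^ 2 := sq_sum_le_card_mul_sum_sq
    _ = #s * ∑ i ∈ s, f i := by
      congr 1
      exact sum_congr rfl fun i hi => Real.sq_sqrt (hf i hi)

theorem lt_of_sq_le_of_one_lt {s t : ℝ} (h : s ^ 2 ≤ t) (ht : 1 < t) : s < t := by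
  nlinarith

theorem sum_mul_div_sum_sub_one_div {ι : Type*} [Fintype ι] (w : ι → ℝ) (hw : ∑ j, w j ≠ 0)
    (a b : ℝ) :
    ∑ i, (a * w i / ∑ j, w j - 1) / b = (a - Fintype.card ι) / b := by
  rw [← sum_div, sum_sub_distrib, ← sum_div, ← mul_sum, mul_div_cancel_right₀ a hw]
  simp

theorem sqrtsum_optimal_controller_general {n : ℕ}
    (c : Fin n → ℕ) (hc : ∀ i, 0 < c i)
    (ε : ℝ) (hε : ε = n * (∑ i, (c i : ℝ)) - n) (hεpos : 0 < ε)
    (πstar : Fin n → ℝ)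
    (hπ : ∀ i, πstar i
      = (((n : ℝ) + ε) * Real.sqrt (c i) / (∑ j, Real.sqrt (c j)) - 1) / ε) :
    (∀ i, 0 < πstar i) ∧ ∑ i, πstar i = 1 := by
  have hn : (1 : ℝ) ≤ n := by
    rcases Nat.eq_zero_or_pos n with rfl | hn
    · simp only [CharP.cast_eq_zero, zero_mul, sub_zero] at hε
      linarith
    · exact_mod_cast hn
  have hsqrt : ∀ i, 1 ≤ √(c i : ℝ) := fun i =>
    Real.one_le_sqrt.mpr (by exact_mod_cast hc i)
  set S := ∑ j, √(c j : ℝ)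
  have hS : 0 < S := sum_pos (fun i _ => by linarith [hsqrt i]) (univ_nonempty_iff.mpr
    ⟨⟨0, by exact_mod_cast hn⟩⟩)
  have hS_sq : S ^ 2 ≤ n + ε := by
    simpa [hε] using sq_sum_sqrt_le_card_mul_sum univ (fun j => (c j : ℝ)) (by simp)
  have hS_lt : S < n + ε := lt_of_sq_le_of_one_lt hS_sq (by linarith)
  refine ⟨fun i => ?_, ?_⟩
  · rw [hπ i]
    refine div_pos (sub_pos.mpr ((one_lt_div hS).mpr ?_)) hεpos
    calc S < n + ε := hS_lt
      _ ≤ (n + ε) * √(c i : ℝ) := le_mul_of_one_le_right (by linarith) (hsqrt i)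
  · rw [Fintype.sum_congr _ _ hπ, sum_mul_div_sum_sub_one_div _ hS.ne', Fintype.card_fin,
      add_sub_cancel_left, div_self hεpos.ne']

/-- The optimal controller π* in the SQRT-SUM reduction is positive and sums to 1. -/
theorem sqrtsum_optimal_controller {n : ℕ} (hn : 0 < n)
    (c : Fin n → ℕ) (hc : ∀ i, 0 < c i)
    (ε : ℝ) (hε : ε = n * (∑ i, (c i : ℝ)) - n) (hεpos : 0 < ε)
    (πstar : Fin n → ℝ)
    (hπ : ∀ i, πstar i
      = (((n : ℝ) + ε) * Real.sqrt (c i) / (∑ j, Real.sqrt (c j)) - 1) / ε) :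
    (∀ i, 0 < πstar i) ∧ ∑ i, πstar i = 1 :=
  sqrtsum_optimal_controller_general c hc ε hε hεpos πstar hπ
end

section
/- Let A(π) = I − γ∑ₐ πₐPₐ where P₁,…,P_k are symmetric stochastic matrices and 0 ≤ γ < 1, and let μ ∈ ℝⁿ. Then the function f(π) = μᵀ A(π)⁻¹ μ is convex on the standard simplex. -/
/-!
For positive definite `A`, `μᵀA⁻¹μ = max_v (2 vᵀμ - vᵀAv)`, the maximum being attained at
`v = A⁻¹μ`. When `A` depends affinely on `π`, this writes `μᵀA(π)⁻¹μ` as a pointwise maximum of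
affine functions of `π`, hence as a convex function wherever `A(π)` is positive definite.
For `π` in the simplex, `N = ∑ₐ πₐPₐ` is a symmetric doubly stochastic matrix, so
`vᵀNv ≤ vᵀv`, and `A(π) = I - γN` is positive definite because `0 ≤ γ < 1`.
-/

open Matrix

namespace Matrix

variable {n : Type*} [Fintype n] [DecidableEq n]

theorem PosDef.isGreatest_dotProduct_inv_mulVec {A : Matrix n n ℝ} (hA : A.PosDef) (μ : n → ℝ) :
    IsGreatest (Set.range fun v => 2 * (v ⬝ᵥ μ) - v ⬝ᵥ A *ᵥ v) (μ ⬝ᵥ A⁻¹ *ᵥ μ) := by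
  set y := A⁻¹ *ᵥ μ
  have hAy : A *ᵥ y = μ := by
    rw [mulVec_mulVec, mul_nonsing_inv _ ((isUnit_iff_isUnit_det A).mp hA.isUnit), one_mulVec]
  have hsymm : ∀ v w : n → ℝ, v ⬝ᵥ A *ᵥ w = w ⬝ᵥ A *ᵥ v := fun v w => by
    rw [dotProduct_mulVec, ← mulVec_transpose, isHermitian_iff_isSymm.mp hA.isHermitian,
      dotProduct_comm]
  refine ⟨⟨y, by simp only [hAy, dotProduct_comm μ y]; ring⟩, ?_⟩
  rintro _ ⟨v, rfl⟩
  have hnonneg : 0 ≤ (v - y) ⬝ᵥ A *ᵥ (v - y) := by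
    simpa using hA.posSemidef.dotProduct_mulVec_nonneg (v - y)
  have hexpand : (v - y) ⬝ᵥ A *ᵥ (v - y) = v ⬝ᵥ A *ᵥ v - 2 * (v ⬝ᵥ μ) + μ ⬝ᵥ y := by
    rw [sub_dotProduct, mulVec_sub, dotProduct_sub, dotProduct_sub, hsymm y v, hAy,
      dotProduct_comm y μ]
    ring
  dsimp only
  linarith

theorem dotProduct_mulVec_le_of_mem_doublyStochastic {R : Type*} [Field R] [LinearOrder R]
    [IsStrictOrderedRing R] {M : Matrix n n R} (hM : M ∈ doublyStochastic R n) (x : n → R) :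
    x ⬝ᵥ M *ᵥ x ≤ x ⬝ᵥ x := by
  obtain ⟨hnonneg, hrow, hcol⟩ := mem_doublyStochastic_iff_sum.mp hM
  have hrow' : ∑ i, ∑ j, M i j * x i ^ 2 = x ⬝ᵥ x := by
    simp [dotProduct, ← Finset.sum_mul, hrow, sq]
  have hcol' : ∑ i, ∑ j, M i j * x j ^ 2 = x ⬝ᵥ x := by
    simp [dotProduct, Finset.sum_comm (γ := n), ← Finset.sum_mul, hcol, sq]
  calc x ⬝ᵥ M *ᵥ x = ∑ i, ∑ j, M i j * (x i * x j) := by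
        simp only [dotProduct, mulVec, Finset.mul_sum]
        exact Finset.sum_congr rfl fun i _ => Finset.sum_congr rfl fun j _ => by ring
    _ ≤ ∑ i, ∑ j, (M i j * x i ^ 2 + M i j * x j ^ 2) / 2 := by
        gcongr with i _ j _
        nlinarith [mul_nonneg (hnonneg i j) (sq_nonneg (x i - x j))]
    _ = x ⬝ᵥ x := by
        simp only [← Finset.sum_div, Finset.sum_add_distrib, hrow', hcol']; ring

theorem posDef_one_sub_smul_of_mem_doublyStochastic {M : Matrix n n ℝ}
    (hM : M ∈ doublyStochastic ℝ n) (hMs : M.IsSymm) {γ : ℝ} (hγ0 : 0 ≤ γ) (hγ1 : γ < 1) :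
    (1 - γ • M).PosDef := by
  refine .of_dotProduct_mulVec_pos (isHermitian_iff_isSymm.mpr (isSymm_one.sub (hMs.smul γ)))
    fun x hx => ?_
  have hx : 0 < x ⬝ᵥ x := by simpa using dotProduct_star_self_pos_iff.mpr hx
  have hle := dotProduct_mulVec_le_of_mem_doublyStochastic hM x
  rw [star_trivial, sub_mulVec, one_mulVec, smul_mulVec, dotProduct_sub, dotProduct_smul,
    smul_eq_mul]
  nlinarith

theorem convexOn_dotProduct_inv_mulVec {E : Type*} [AddCommGroup E] [Module ℝ E] {s : Set E}
    (hs : Convex ℝ s) (A : E →ᵃ[ℝ] Matrix n n ℝ) (hA : ∀ x ∈ s, (A x).PosDef) (μ : n → ℝ) :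
    ConvexOn ℝ s fun x => μ ⬝ᵥ (A x)⁻¹ *ᵥ μ := by
  refine ⟨hs, fun x hx y hy a b ha hb hab => ?_⟩
  obtain ⟨⟨v, hv⟩, -⟩ := (hA _ (hs hx hy ha hb hab)).isGreatest_dotProduct_inv_mulVec μ
  have hvx := (hA x hx).isGreatest_dotProduct_inv_mulVec μ |>.2 ⟨v, rfl⟩
  have hvy := (hA y hy).isGreatest_dotProduct_inv_mulVec μ |>.2 ⟨v, rfl⟩
  dsimp only at hv hvx hvy ⊢
  rw [← hv, Convex.combo_affine_apply hab, add_mulVec, smul_mulVec, smul_mulVec, dotProduct_add,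
    dotProduct_smul, dotProduct_smul, smul_eq_mul, smul_eq_mul, smul_eq_mul, smul_eq_mul]
  calc 2 * (v ⬝ᵥ μ) - (a * (v ⬝ᵥ A x *ᵥ v) + b * (v ⬝ᵥ A y *ᵥ v))
      = a * (2 * (v ⬝ᵥ μ) - v ⬝ᵥ A x *ᵥ v) + b * (2 * (v ⬝ᵥ μ) - v ⬝ᵥ A y *ᵥ v) := by
        linear_combination (2 * (v ⬝ᵥ μ)) * hab.symm
    _ ≤ a * (μ ⬝ᵥ (A x)⁻¹ *ᵥ μ) + b * (μ ⬝ᵥ (A y)⁻¹ *ᵥ μ) := by gcongr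

end Matrix

/-- f(π) = μᵀ(I − γ∑ₐπₐPₐ)⁻¹μ is convex on the standard simplex. -/
theorem matrix_fractional_convex_on_simplex {n k : ℕ}
    (P : Fin k → Matrix (Fin n) (Fin n) ℝ)
    (hsymm : ∀ a, (P a).IsSymm)
    (hnonneg : ∀ a i j, 0 ≤ P a i j) (hrow : ∀ a i, ∑ j, P a i j = 1)
    (γ : ℝ) (hγ0 : 0 ≤ γ) (hγ1 : γ < 1) (μ : Fin n → ℝ) :
    ConvexOn ℝ (stdSimplex ℝ (Fin k))
      (fun π : Fin k → ℝ => μ ⬝ᵥ (1 - γ • ∑ a, π a • P a)⁻¹.mulVec μ) := by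
  have hP : ∀ a, P a ∈ doublyStochastic ℝ (Fin n) := fun a =>
    mem_doublyStochastic_iff_sum.mpr
      ⟨hnonneg a, hrow a, fun j => by simpa only [(hsymm a).apply] using hrow a j⟩
  let A : (Fin k → ℝ) →ᵃ[ℝ] Matrix (Fin n) (Fin n) ℝ :=
    AffineMap.const ℝ _ 1 - (γ • Fintype.linearCombination ℝ P).toAffineMap
  refine convexOn_dotProduct_inv_mulVec (convex_stdSimplex ℝ _) A (fun π hπ => ?_) μ
  refine posDef_one_sub_smul_of_mem_doublyStochastic ?_ ?_ hγ0 hγ1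
  · exact convex_doublyStochastic.sum_mem (fun a _ => hπ.1 a) hπ.2 fun a _ => hP a
  · simp only [IsSymm, Fintype.linearCombination_apply, transpose_sum, transpose_smul,
      (hsymm _).eq]
end
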